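/- arXiv:2604.25738 — 6 statements merged into one kernel-verified Lean document; each statement's English description precedes it below -/
import Mathlib

section
/- The set of synchronous steady states of the single-machine infinite-bus system has exactly two elements if |P| < 1, exactly one element if |P| = 1, and is empty if |P| > 1, where P := (−λ²·ω_s·R + (T_m − K·ω_s)·(L²·ω_s² + R²)) / (λ·V_a·√(L²·ω_s² + R²)). -/
/-!
Since `R > 0` the impedance `z = R + i ω_s L` is nonzero, so the phasor equation determines `I₀`
from `ξ₀`; substituting it, the torque balance becomes the linear condition
`Im (ξ₀ · z / |z|) = P`. Rotation by the unit `z / |z|` therefore identifies the steady states with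
the points of the unit circle at height `P`: two, one or none according as `|P| < 1`, `|P| = 1`
or `|P| > 1`.
-/

open ComplexConjugate

namespace Complex

theorem setOf_norm_eq_one_im_eq_pair {p : ℝ} (hp : |p| ≤ 1) :
    {ζ : ℂ | ‖ζ‖ = 1 ∧ ζ.im = p} = {⟨√(1 - p ^ 2), p⟩, ⟨-√(1 - p ^ 2), p⟩} := by
  have hs : √(1 - p ^ 2) ^ 2 = 1 - p ^ 2 := Real.sq_sqrt (by nlinarith [abs_le.mp hp])
  ext ⟨x, y⟩
  simp only [Set.mem_ofPred_eq, Set.mem_insert_iff, Set.mem_singleton_iff, Complex.ext_iff,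
    norm_def, Real.sqrt_eq_one, normSq_mk]
  constructor
  · rintro ⟨hxy, rfl⟩
    have : (x - √(1 - y ^ 2)) * (x + √(1 - y ^ 2)) = 0 := by linear_combination hxy - hs
    rcases mul_eq_zero.mp this with h | h
    · exact .inl ⟨by linarith, rfl⟩
    · exact .inr ⟨by linarith, rfl⟩
  · rintro (⟨rfl, rfl⟩ | ⟨rfl, rfl⟩) <;> exact ⟨by linear_combination hs, rfl⟩

theorem setOf_norm_eq_one_im_eq_empty {p : ℝ} (hp : 1 < |p|) :
    {ζ : ℂ | ‖ζ‖ = 1 ∧ ζ.im = p} = ∅ :=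
  Set.eq_empty_of_forall_notMem fun ζ ⟨hζ, him⟩ =>
    (abs_im_le_norm ζ).not_gt (by rwa [hζ, him])

theorem ncard_setOf_norm_eq_one_im_eq_of_abs_lt {p : ℝ} (hp : |p| < 1) :
    {ζ : ℂ | ‖ζ‖ = 1 ∧ ζ.im = p}.ncard = 2 := by
  have : 0 < √(1 - p ^ 2) := Real.sqrt_pos.mpr (by nlinarith [abs_lt.mp hp])
  rw [setOf_norm_eq_one_im_eq_pair hp.le, Set.ncard_pair]
  simp only [ne_eq, Complex.ext_iff, not_and]
  intro h
  linarith

theorem ncard_setOf_norm_eq_one_im_eq_of_abs_eq_one {p : ℝ} (hp : |p| = 1) :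
    {ζ : ℂ | ‖ζ‖ = 1 ∧ ζ.im = p}.ncard = 1 := by
  have : 1 - p ^ 2 = 0 := by rw [← sq_abs, hp]; norm_num
  rw [setOf_norm_eq_one_im_eq_pair hp.le, this, Real.sqrt_zero, neg_zero, Set.pair_eq_singleton,
    Set.ncard_singleton]

theorem re_conj_mul_I_mul_of_mul_eq {z ξ w : ℂ} {V a : ℝ} (hz : z ≠ 0) (hξ : ‖ξ‖ = 1)
    (h : z * w = V - I * a * ξ) :
    (conj w * (I * ξ)).re = -(V * (ξ * z).im + a * z.re) / normSq z := by
  have hξ' : conj ξ * ξ = 1 := by rw [mul_comm, mul_conj, normSq_eq_norm_sq, hξ]; norm_num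
  have : conj w * (I * ξ) = (I * V * ξ - a) * z / normSq z := by
    rw [eq_div_iff (by exact_mod_cast (normSq_pos.mpr hz).ne'), ← mul_conj]
    calc conj w * (I * ξ) * (z * conj z) = conj (z * w) * (I * ξ) * z := by rw [map_mul]; ring
      _ = (I * V * ξ - a * (conj ξ * ξ)) * z := by
        rw [h]; simp only [map_sub, map_mul, conj_ofReal, conj_I]; ring_nf; rw [I_sq]; ring
      _ = (I * V * ξ - a) * z := by rw [hξ', mul_one]
  rw [this, div_ofReal_re]
  congr 1
  simp only [mul_re, mul_im, sub_re, sub_im, I_re, I_im, ofReal_re, ofReal_im]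
  ring

end Complex

open Complex

namespace SMIB

/-- `z` is the impedance `R + i ω L` and `τ` the net torque `T_m - K ω`. -/
def steadyStates (z : ℂ) (lam ω V τ : ℝ) : Set (ℂ × ℂ) :=
  {p | ‖p.1‖ = 1 ∧ z * p.2 = (V : ℂ) - I * lam * ω * p.1 ∧ τ = -lam * (conj p.2 * (I * p.1)).re}

variable {z : ℂ} {lam ω V : ℝ}

theorem torque_balance_iff {ξ w : ℂ} (hz : z ≠ 0) (hlam : lam ≠ 0) (hV : V ≠ 0)
    (τ : ℝ) (hξ : ‖ξ‖ = 1) (hw : z * w = V - I * lam * ω * ξ) :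
    τ = -lam * (conj w * (I * ξ)).re ↔
      (ξ * (z / ‖z‖)).im = (-lam ^ 2 * ω * z.re + τ * normSq z) / (lam * V * ‖z‖) := by
  have hn : 0 < normSq z := normSq_pos.mpr hz
  have hm : 0 < ‖z‖ := norm_pos_iff.mpr hz
  rw [re_conj_mul_I_mul_of_mul_eq (a := lam * ω) hz hξ (by rw [hw]; push_cast; ring),
    ← mul_div_assoc ξ, div_ofReal_im]
  field_simp
  constructor <;> intro h <;> linarith

theorem steadyStates_eq_image (hz : z ≠ 0) (hlam : lam ≠ 0) (hV : V ≠ 0) (τ : ℝ) :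
    steadyStates z lam ω V τ =
    (fun ζ => (ζ / (z / ‖z‖), ((V : ℂ) - I * lam * ω * (ζ / (z / ‖z‖))) / z)) ''
      {ζ : ℂ | ‖ζ‖ = 1 ∧ ζ.im = (-lam ^ 2 * ω * z.re + τ * normSq z) / (lam * V * ‖z‖)} := by
  have hu : ‖z / ‖z‖‖ = 1 := by simp [hz]
  have hu0 : z / ‖z‖ ≠ 0 := norm_ne_zero_iff.mp (by rw [hu]; exact one_ne_zero)
  ext ⟨ξ, w⟩
  simp only [steadyStates, Set.mem_ofPred_eq, Set.mem_image, Prod.mk.injEq]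
  constructor
  · rintro ⟨hξ, hw, hτ⟩
    refine ⟨ξ * (z / ‖z‖), ⟨by rw [norm_mul, hξ, hu, one_mul],
      (torque_balance_iff hz hlam hV τ hξ hw).mp hτ⟩, mul_div_cancel_right₀ _ hu0, ?_⟩
    rw [mul_div_cancel_right₀ _ hu0, ← hw, mul_div_cancel_left₀ _ hz]
  · rintro ⟨ζ, ⟨hζ, him⟩, rfl, rfl⟩
    have hξ : ‖ζ / (z / ‖z‖)‖ = 1 := by rw [norm_div, hζ, hu, div_one]
    have hw := mul_div_cancel₀ ((V : ℂ) - I * lam * ω * (ζ / (z / ‖z‖))) hz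
    exact ⟨hξ, hw, (torque_balance_iff hz hlam hV τ hξ hw).mpr (by rwa [div_mul_cancel₀ _ hu0])⟩

theorem ncard_steadyStates (hz : z ≠ 0) (hlam : lam ≠ 0) (hV : V ≠ 0) (τ : ℝ) :
    (steadyStates z lam ω V τ).ncard =
    {ζ : ℂ | ‖ζ‖ = 1 ∧ ζ.im = (-lam ^ 2 * ω * z.re + τ * normSq z) / (lam * V * ‖z‖)}.ncard := by
  rw [steadyStates_eq_image hz hlam hV τ]
  refine Set.ncard_image_of_injective _ fun _ _ h => ?_
  exact (div_left_inj' (div_ne_zero hz (by simpa using hz))).mp (congrArg Prod.fst h)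

end SMIB

open SMIB

theorem smib_steady_state_count_general
    (R L lam ωs Va K Tm : ℝ)
    (hR : 0 < R) (hlam : 0 < lam) (hVa : 0 < Va)
    (P : ℝ)
    (hP : P = (-lam ^ 2 * ωs * R + (Tm - K * ωs) * (L ^ 2 * ωs ^ 2 + R ^ 2)) /
      (lam * Va * Real.sqrt (L ^ 2 * ωs ^ 2 + R ^ 2)))
    (S : Set (ℂ × ℂ))
    (hS : S = {p : ℂ × ℂ | ‖p.1‖ = 1 ∧
      ((R : ℂ) + Complex.I * ωs * L) * p.2 = (Va : ℂ) - Complex.I * lam * ωs * p.1 ∧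
      Tm - K * ωs = -lam * ((starRingEnd ℂ p.2) * (Complex.I * p.1)).re}) :
    (|P| < 1 → S.ncard = 2) ∧ (|P| = 1 → S.ncard = 1) ∧ (1 < |P| → S = ∅) := by
  set z : ℂ := R + I * ωs * L
  have hz_re : z.re = R := by simp [z]
  have hz : z ≠ 0 := fun h => hR.ne' (by rw [← hz_re, h, zero_re])
  have hP' : P = (-lam ^ 2 * ωs * z.re + (Tm - K * ωs) * normSq z) / (lam * Va * ‖z‖) := by
    have hnormSq : normSq z = L ^ 2 * ωs ^ 2 + R ^ 2 := by simp [z, normSq_apply]; ring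
    rw [hP, hz_re, norm_def, hnormSq]
  have hSz : S = steadyStates z lam ωs Va (Tm - K * ωs) := hS
  have hcard := ncard_steadyStates hz hlam.ne' hVa.ne' (ω := ωs) (Tm - K * ωs)
  rw [← hSz, ← hP'] at hcard
  refine ⟨fun h => ?_, fun h => ?_, fun h => ?_⟩
  · rw [hcard, ncard_setOf_norm_eq_one_im_eq_of_abs_lt h]
  · rw [hcard, ncard_setOf_norm_eq_one_im_eq_of_abs_eq_one h]
  · rw [hSz, steadyStates_eq_image hz hlam.ne' hVa.ne', ← hP', setOf_norm_eq_one_im_eq_empty h,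
      Set.image_empty]

/-- The set of synchronous steady states of the single-machine
infinite-bus system has exactly two elements if `|P| < 1`, exactly one element if
`|P| = 1`, and is empty if `|P| > 1`. -/
theorem smib_steady_state_count
    (R L lam ωs Va K Tm : ℝ)
    (hR : 0 < R) (hL : 0 < L) (hlam : 0 < lam) (hωs : 0 < ωs) (hVa : 0 < Va)
    (P : ℝ)
    (hP : P = (-lam ^ 2 * ωs * R + (Tm - K * ωs) * (L ^ 2 * ωs ^ 2 + R ^ 2)) /
      (lam * Va * Real.sqrt (L ^ 2 * ωs ^ 2 + R ^ 2)))
    (S : Set (ℂ × ℂ))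
    (hS : S = {p : ℂ × ℂ | ‖p.1‖ = 1 ∧
      ((R : ℂ) + Complex.I * ωs * L) * p.2 = (Va : ℂ) - Complex.I * lam * ωs * p.1 ∧
      Tm - K * ωs = -lam * ((starRingEnd ℂ p.2) * (Complex.I * p.1)).re}) :
    (|P| < 1 → S.ncard = 2) ∧ (|P| = 1 → S.ncard = 1) ∧ (1 < |P| → S = ∅) :=
  smib_steady_state_count_general R L lam ωs Va K Tm hR hlam hVa P hP S hS
end

section
/- The matrix Q(ω̄) is positive definite if and only if K > J·ω̄ and K·ω̄² − λ·ω̄·a − λ²·ω̄²/(4R) − η²/(4(K − J·ω̄)) > 0. -/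
/-!
Completing the square twice: for `p, r ≠ 0` the quadratic form of the tridiagonal matrix
`!![p, b, 0; b, q, c; 0, c, r]` equals
`p (x₀ + b x₁ / p)² + r (x₂ + c x₁ / r)² + (q - b² / p - c² / r) x₁²`,
so with `r > 0` it is positive definite exactly when `p > 0` and the Schur complement
`q - b² / p - c² / r` is positive. For `Q(ω̄)` the `T_m` term vanishes and this complement is the
expression of the statement.
-/

open Matrix

section Tridiagonal

variable {p b q c r : ℝ}

lemma dotProduct_tridiagonal_mulVec (x : Fin 3 → ℝ) :
    x ⬝ᵥ (!![p, b, 0; b, q, c; 0, c, r] *ᵥ x) =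
      p * x 0 ^ 2 + 2 * b * x 0 * x 1 + q * x 1 ^ 2 + 2 * c * x 1 * x 2 + r * x 2 ^ 2 := by
  simp only [dotProduct, mulVec, Fin.sum_univ_three, of_apply, cons_val', cons_val_zero,
    cons_val_one, cons_val_two, empty_val', cons_val_fin_one, tail_cons, vecHead]
  ring

lemma tridiagonal_form_eq_sum_sq (hp : p ≠ 0) (hr : r ≠ 0) (x y z : ℝ) :
    p * x ^ 2 + 2 * b * x * y + q * y ^ 2 + 2 * c * y * z + r * z ^ 2 =
      p * (x + b / p * y) ^ 2 + r * (z + c / r * y) ^ 2 + (q - b ^ 2 / p - c ^ 2 / r) * y ^ 2 := by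
  field_simp
  ring

theorem tridiagonal_quadForm_pos_iff (hr : 0 < r) :
    (∀ x : Fin 3 → ℝ, x ≠ 0 → 0 < x ⬝ᵥ (!![p, b, 0; b, q, c; 0, c, r] *ᵥ x)) ↔
      0 < p ∧ 0 < q - b ^ 2 / p - c ^ 2 / r := by
  simp only [dotProduct_tridiagonal_mulVec]
  constructor
  · intro h
    have hp : 0 < p := by simpa using h ![1, 0, 0] (by simp)
    refine ⟨hp, ?_⟩
    -- this vector makes both squares vanish
    have hs := h ![-b / p, 1, -c / r] (by simp)
    rw [tridiagonal_form_eq_sum_sq hp.ne' hr.ne'] at hs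
    simpa [neg_div] using hs
  · rintro ⟨hp, hs⟩ x hx
    rw [tridiagonal_form_eq_sum_sq hp.ne' hr.ne']
    by_contra! hle
    have hx₀ := mul_nonneg hp.le (sq_nonneg (x 0 + b / p * x 1))
    have hx₂ := mul_nonneg hr.le (sq_nonneg (x 2 + c / r * x 1))
    have hx₁ := mul_nonneg hs.le (sq_nonneg (x 1))
    have h1 : x 1 = 0 := by
      have : (q - b ^ 2 / p - c ^ 2 / r) * x 1 ^ 2 = 0 := by linarith
      simpa [hs.ne'] using this
    simp only [h1, mul_zero, add_zero, zero_pow two_ne_zero] at hx₀ hx₂ hle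
    have h0 : x 0 = 0 := by
      have : p * x 0 ^ 2 = 0 := by linarith
      simpa [hp.ne'] using this
    have h2 : x 2 = 0 := by
      have : r * x 2 ^ 2 = 0 := by linarith
      simpa [hr.ne'] using this
    exact hx (funext fun i => by fin_cases i <;> assumption)

end Tridiagonal

theorem Q_posdef_at_steady_state_iff_general
    (J K R lam Tm ωb η a : ℝ)
    (hR : 0 < R)
    (Q : ℝ → Matrix (Fin 3) (Fin 3) ℝ)
    (hQ : ∀ ω, Q ω = !![K - J * ωb, -η / 2, 0;
                        -η / 2, K * ωb * ω - lam * ωb * a - Tm * (ω - ωb) / 2, -lam * ωb / 2;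
                        0, -lam * ωb / 2, R]) :
    (∀ x : Fin 3 → ℝ, x ≠ 0 → 0 < dotProduct x ((Q ωb).mulVec x)) ↔
      (K > J * ωb ∧
        0 < K * ωb ^ 2 - lam * ωb * a - lam ^ 2 * ωb ^ 2 / (4 * R) -
          η ^ 2 / (4 * (K - J * ωb))) := by
  have hschur : K * ωb * ωb - lam * ωb * a - Tm * (ωb - ωb) / 2 - (-η / 2) ^ 2 / (K - J * ωb) -
        (-lam * ωb / 2) ^ 2 / R =
      K * ωb ^ 2 - lam * ωb * a - lam ^ 2 * ωb ^ 2 / (4 * R) - η ^ 2 / (4 * (K - J * ωb)) := by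
    simp only [← div_div]
    ring
  rw [hQ ωb, tridiagonal_quadForm_pos_iff hR, hschur, sub_pos, gt_iff_lt]

/-- The matrix `Q(ω̄)` is positive definite if and only if
`K > J·ω̄` and `K·ω̄² − λ·ω̄·a − λ²·ω̄²/(4R) − η²/(4(K − J·ω̄)) > 0`. -/
theorem Q_posdef_at_steady_state_iff
    (J K R L lam Tm ωb η a : ℝ)
    (hJ : 0 < J) (hK : 0 < K) (hR : 0 < R) (hL : 0 < L) (hlam : 0 < lam)
    (hTm : 0 < Tm) (hωb : 0 < ωb) (hη : 0 ≤ η) (ha : 0 ≤ a)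
    (Q : ℝ → Matrix (Fin 3) (Fin 3) ℝ)
    (hQ : ∀ ω, Q ω = !![K - J * ωb, -η / 2, 0;
                        -η / 2, K * ωb * ω - lam * ωb * a - Tm * (ω - ωb) / 2, -lam * ωb / 2;
                        0, -lam * ωb / 2, R]) :
    (∀ x : Fin 3 → ℝ, x ≠ 0 → 0 < dotProduct x ((Q ωb).mulVec x)) ↔
      (K > J * ωb ∧
        0 < K * ωb ^ 2 - lam * ωb * a - lam ^ 2 * ωb ^ 2 / (4 * R) -
          η ^ 2 / (4 * (K - J * ωb))) :=
  Q_posdef_at_steady_state_iff_general J K R lam Tm ωb η a hR Q hQ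
end

section
/- Assume K > J·ω̄. Then for any ω ∈ ℝ, the matrix Q(ω) is positive definite if and only if 0 < (K·ω̄ − T_m/2)·(ω − ω̄) + K·ω̄² − λ·ω̄·a − λ²·ω̄²/(4R) − η²/(4(K − J·ω̄)). -/
/-! Completing the square in the first and third coordinates writes the quadratic form of
`Q(ω)` as `A (x₀ - η x₁ / 2A)² + R (x₂ - λω̄ x₁ / 2R)² + c x₁²` with `A = K - Jω̄ > 0`, `R > 0`
and `c` the Schur complement of the outer diagonal entries, which is the affine expression in
`ω`. Such a form is positive definite exactly when `c > 0`. -/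

open Matrix

section TridiagonalForm

variable {p q m r s : ℝ}

theorem dotProduct_mulVec_tridiag (hp : p ≠ 0) (hs : s ≠ 0) (x : Fin 3 → ℝ) :
    x ⬝ᵥ (!![p, q, 0; q, m, r; 0, r, s] *ᵥ x) =
      p * (x 0 + q / p * x 1) ^ 2 + s * (x 2 + r / s * x 1) ^ 2 +
        (m - q ^ 2 / p - r ^ 2 / s) * x 1 ^ 2 := by
  simp [dotProduct, mulVec, Fin.sum_univ_three]
  field_simp
  ring

theorem pos_of_tridiag_quadForm_pos (hp : 0 < p) (hs : 0 < s)
    (h : ∀ x : Fin 3 → ℝ, x ≠ 0 → 0 < x ⬝ᵥ (!![p, q, 0; q, m, r; 0, r, s] *ᵥ x)) :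
    0 < m - q ^ 2 / p - r ^ 2 / s := by
  -- the vector on which both completed squares vanish
  have hx : (![-(q / p), 1, -(r / s)] : Fin 3 → ℝ) ≠ 0 := fun h0 => by
    simpa using congrFun h0 1
  have hpos := h _ hx
  rw [dotProduct_mulVec_tridiag hp.ne' hs.ne'] at hpos
  simpa [div_mul_cancel₀, hp.ne', hs.ne'] using hpos

theorem tridiag_quadForm_pos (hp : 0 < p) (hs : 0 < s) (hc : 0 < m - q ^ 2 / p - r ^ 2 / s)
    {x : Fin 3 → ℝ} (hx : x ≠ 0) :
    0 < x ⬝ᵥ (!![p, q, 0; q, m, r; 0, r, s] *ᵥ x) := by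
  rw [dotProduct_mulVec_tridiag hp.ne' hs.ne']
  by_cases h1 : x 1 = 0
  · have h02 : x 0 ≠ 0 ∨ x 2 ≠ 0 := by
      by_contra! h02
      exact hx (funext fun i => by fin_cases i <;> simp [h02.1, h1, h02.2])
    simp only [h1, mul_zero, add_zero, ne_eq, OfNat.ofNat_ne_zero, not_false_eq_true,
      zero_pow]
    rcases h02 with h0 | h2 <;> positivity
  · positivity

theorem tridiag_quadForm_pos_iff (hp : 0 < p) (hs : 0 < s) :
    (∀ x : Fin 3 → ℝ, x ≠ 0 → 0 < x ⬝ᵥ (!![p, q, 0; q, m, r; 0, r, s] *ᵥ x)) ↔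
      0 < m - q ^ 2 / p - r ^ 2 / s :=
  ⟨pos_of_tridiag_quadForm_pos hp hs, fun hc _ => tridiag_quadForm_pos hp hs hc⟩

end TridiagonalForm

theorem Q_posdef_iff_affine_condition_general
    (J K R lam Tm ωb η a : ℝ)
    (hR : 0 < R)
    (Q : ℝ → Matrix (Fin 3) (Fin 3) ℝ)
    (hQ : ∀ ω, Q ω = !![K - J * ωb, -η / 2, 0;
                        -η / 2, K * ωb * ω - lam * ωb * a - Tm * (ω - ωb) / 2, -lam * ωb / 2;
                        0, -lam * ωb / 2, R])
    (hKJ : K > J * ωb) :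
    ∀ ω : ℝ,
      (∀ x : Fin 3 → ℝ, x ≠ 0 → 0 < dotProduct x ((Q ω).mulVec x)) ↔
        0 < (K * ωb - Tm / 2) * (ω - ωb) + K * ωb ^ 2 - lam * ωb * a -
          lam ^ 2 * ωb ^ 2 / (4 * R) - η ^ 2 / (4 * (K - J * ωb)) := by
  intro ω
  have hA : 0 < K - J * ωb := sub_pos.mpr hKJ
  rw [hQ, tridiag_quadForm_pos_iff hA hR]
  congr! 1
  field_simp
  ring

/-- Assuming `K > J·ω̄`, the matrix `Q(ω)` is positive definite if and
only if `0 < (K·ω̄ − T_m/2)·(ω − ω̄) + K·ω̄² − λ·ω̄·a − λ²·ω̄²/(4R) − η²/(4(K − J·ω̄))`. -/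
theorem Q_posdef_iff_affine_condition
    (J K R L lam Tm ωb η a : ℝ)
    (hJ : 0 < J) (hK : 0 < K) (hR : 0 < R) (hL : 0 < L) (hlam : 0 < lam)
    (hTm : 0 < Tm) (hωb : 0 < ωb) (hη : 0 ≤ η) (ha : 0 ≤ a)
    (Q : ℝ → Matrix (Fin 3) (Fin 3) ℝ)
    (hQ : ∀ ω, Q ω = !![K - J * ωb, -η / 2, 0;
                        -η / 2, K * ωb * ω - lam * ωb * a - Tm * (ω - ωb) / 2, -lam * ωb / 2;
                        0, -lam * ωb / 2, R])
    (hKJ : K > J * ωb) :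
    ∀ ω : ℝ,
      (∀ x : Fin 3 → ℝ, x ≠ 0 → 0 < dotProduct x ((Q ω).mulVec x)) ↔
        0 < (K * ωb - Tm / 2) * (ω - ωb) + K * ωb ^ 2 - lam * ωb * a -
          lam ^ 2 * ωb ^ 2 / (4 * R) - η ^ 2 / (4 * (K - J * ωb)) :=
  Q_posdef_iff_affine_condition_general J K R lam Tm ωb η a hR Q hQ hKJ
end

section
/- Assume K > J·ω̄, K̂ := K − λ·a/ω̄ − λ²/(4R) − η²/(4(K·ω̄² − J·ω̄³)) > 0, and 1 − K·ω̄/T_m < 1/2. Define ρ := K̂·ω̄²/(K·ω̄ − T_m/2). Then for every ω ∈ ℝ with ω > ω̄ − ρ, the matrix Q(ω) is positive definite. -/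
/-!
`Q(ω)` is tridiagonal with positive corner entries `K - J ω̄` and `R`, so completing the square in
the first and last coordinates shows that it is positive definite as soon as the Schur complement
`q(ω) - η²/(4(K - J ω̄)) - λ²ω̄²/(4R)` of its middle entry `q(ω)` is positive. That Schur complement
is affine in `ω` and equals `(K ω̄ - T_m/2)(ω - (ω̄ - ρ))`, whose slope is positive because
`K ω̄ / T_m > 1/2`.
-/

lemma dotProduct_mulVec_tridiag_s4 {R : Type*} [CommRing R] (a b c d e : R) (x : Fin 3 → R) :
    dotProduct x (!![a, b, 0; b, d, c; 0, c, e].mulVec x) =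
      a * x 0 ^ 2 + 2 * b * x 0 * x 1 + d * x 1 ^ 2 + 2 * c * x 1 * x 2 + e * x 2 ^ 2 := by
  simp only [dotProduct, Matrix.mulVec, Matrix.of_apply, Matrix.cons_val', Matrix.cons_val_fin_one,
    Fin.sum_univ_three, Matrix.cons_val_zero, Matrix.cons_val_one, Matrix.cons_val]
  ring

lemma fin_three_apply_ne_zero_of_ne_zero {M : Type*} [Zero M] {x : Fin 3 → M} (hx : x ≠ 0) :
    x 0 ≠ 0 ∨ x 1 ≠ 0 ∨ x 2 ≠ 0 := by
  contrapose! hx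
  ext i
  fin_cases i <;> simp [hx]

section Tridiagonal

variable {𝕜 : Type*} [Field 𝕜] [LinearOrder 𝕜] [IsStrictOrderedRing 𝕜]

lemma tridiag_quadratic_pos {a b c d e x y z : 𝕜} (ha : 0 < a) (he : 0 < e)
    (hd : b ^ 2 / a + c ^ 2 / e < d) (hxyz : x ≠ 0 ∨ y ≠ 0 ∨ z ≠ 0) :
    0 < a * x ^ 2 + 2 * b * x * y + d * y ^ 2 + 2 * c * y * z + e * z ^ 2 := by
  have hsquares : a * e * (a * x ^ 2 + 2 * b * x * y + d * y ^ 2 + 2 * c * y * z + e * z ^ 2) =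
      e * (a * x + b * y) ^ 2 + a * (e * z + c * y) ^ 2 +
        a * e * (d - b ^ 2 / a - c ^ 2 / e) * y ^ 2 := by
    field_simp
    ring
  have hschur : 0 < a * e * (d - b ^ 2 / a - c ^ 2 / e) := mul_pos (mul_pos ha he) (by linarith)
  refine pos_of_mul_pos_right (hsquares ▸ ?_) (mul_pos ha he).le
  by_cases hy : y = 0
  · subst hy
    rcases hxyz with hx | hy | hz
    · nlinarith [mul_pos he (mul_pos ha (sq_pos_of_ne_zero hx)), sq_nonneg z]
    · exact absurd rfl hy
    · nlinarith [mul_pos ha (mul_pos he (sq_pos_of_ne_zero hz)), sq_nonneg x]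
  · exact add_pos_of_nonneg_of_pos (by positivity) (mul_pos hschur (sq_pos_of_ne_zero hy))

lemma dotProduct_mulVec_tridiag_pos {a b c d e : 𝕜} (ha : 0 < a) (he : 0 < e)
    (hd : b ^ 2 / a + c ^ 2 / e < d) {x : Fin 3 → 𝕜} (hx : x ≠ 0) :
    0 < dotProduct x (!![a, b, 0; b, d, c; 0, c, e].mulVec x) := by
  rw [dotProduct_mulVec_tridiag_s4]
  exact tridiag_quadratic_pos ha he hd (fin_three_apply_ne_zero_of_ne_zero hx)

end Tridiagonal

lemma Q_schur_complement_eq {J K R lam Tm ωb η a Khat ρ : ℝ} (ω : ℝ) (hωb : ωb ≠ 0)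
    (hR : R ≠ 0) (hslope : K * ωb - Tm / 2 ≠ 0)
    (hKhat : Khat = K - lam * a / ωb - lam ^ 2 / (4 * R) -
      η ^ 2 / (4 * (K * ωb ^ 2 - J * ωb ^ 3)))
    (hρ : ρ = Khat * ωb ^ 2 / (K * ωb - Tm / 2)) :
    K * ωb * ω - lam * ωb * a - Tm * (ω - ωb) / 2 - (-η / 2) ^ 2 / (K - J * ωb)
        - (-lam * ωb / 2) ^ 2 / R = (K * ωb - Tm / 2) * (ω - (ωb - ρ)) := by
  have hρ' : ρ * (K * ωb - Tm / 2) = Khat * ωb ^ 2 := by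
    rw [hρ, div_mul_cancel₀ _ hslope]
  have hKhat' : Khat * ωb ^ 2 = K * ωb ^ 2 - lam * a * ωb - (-lam * ωb / 2) ^ 2 / R
      - (-η / 2) ^ 2 / (K - J * ωb) := by
    rw [hKhat, show K * ωb ^ 2 - J * ωb ^ 3 = ωb ^ 2 * (K - J * ωb) by ring]
    field_simp
    ring
  linear_combination -hρ' - hKhat'

lemma sub_half_pos_of_one_sub_div_lt_half {s T : ℝ} (hT : 0 < T) (h : 1 - s / T < 1 / 2) :
    0 < s - T / 2 := by
  have := (lt_div_iff₀ hT).mp (show 1 / 2 < s / T by linarith)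
  linarith

theorem Q_posdef_above_threshold_general
    (J K R lam Tm ωb η a : ℝ)
    (hR : 0 < R)
    (hTm : 0 < Tm) (hωb : 0 < ωb)
    (Q : ℝ → Matrix (Fin 3) (Fin 3) ℝ)
    (hQ : ∀ ω, Q ω = !![K - J * ωb, -η / 2, 0;
                        -η / 2, K * ωb * ω - lam * ωb * a - Tm * (ω - ωb) / 2, -lam * ωb / 2;
                        0, -lam * ωb / 2, R])
    (hKJ : K > J * ωb)
    (Khat : ℝ)
    (hKhat : Khat = K - lam * a / ωb - lam ^ 2 / (4 * R) -
      η ^ 2 / (4 * (K * ωb ^ 2 - J * ωb ^ 3)))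
    (hc : 1 - K * ωb / Tm < 1 / 2)
    (ρ : ℝ) (hρ : ρ = Khat * ωb ^ 2 / (K * ωb - Tm / 2)) :
    ∀ ω : ℝ, ω > ωb - ρ →
      ∀ x : Fin 3 → ℝ, x ≠ 0 → 0 < dotProduct x ((Q ω).mulVec x) := by
  intro ω hω x hx
  have hA : 0 < K - J * ωb := sub_pos.2 hKJ
  have hslope := sub_half_pos_of_one_sub_div_lt_half hTm hc
  rw [hQ]
  refine dotProduct_mulVec_tridiag_pos hA hR ?_ hx
  have hschur := Q_schur_complement_eq ω hωb.ne' hR.ne' hslope.ne' hKhat hρ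
  linarith [mul_pos hslope (sub_pos.2 hω)]

/-- Under Assumption 1, `Q(ω)` is positive definite for every
`ω > ω̄ − ρ` with `ρ := K̂·ω̄²/(K·ω̄ − T_m/2)`. -/
theorem Q_posdef_above_threshold
    (J K R L lam Tm ωb η a : ℝ)
    (hJ : 0 < J) (hK : 0 < K) (hR : 0 < R) (hL : 0 < L) (hlam : 0 < lam)
    (hTm : 0 < Tm) (hωb : 0 < ωb) (hη : 0 ≤ η) (ha : 0 ≤ a)
    (Q : ℝ → Matrix (Fin 3) (Fin 3) ℝ)
    (hQ : ∀ ω, Q ω = !![K - J * ωb, -η / 2, 0;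
                        -η / 2, K * ωb * ω - lam * ωb * a - Tm * (ω - ωb) / 2, -lam * ωb / 2;
                        0, -lam * ωb / 2, R])
    (hKJ : K > J * ωb)
    (Khat : ℝ)
    (hKhat : Khat = K - lam * a / ωb - lam ^ 2 / (4 * R) -
      η ^ 2 / (4 * (K * ωb ^ 2 - J * ωb ^ 3)))
    (hKhatpos : 0 < Khat)
    (hc : 1 - K * ωb / Tm < 1 / 2)
    (ρ : ℝ) (hρ : ρ = Khat * ωb ^ 2 / (K * ωb - Tm / 2)) :
    ∀ ω : ℝ, ω > ωb - ρ →
      ∀ x : Fin 3 → ℝ, x ≠ 0 → 0 < dotProduct x ((Q ω).mulVec x) :=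
  Q_posdef_above_threshold_general J K R lam Tm ωb η a hR hTm hωb Q hQ hKJ Khat hKhat hc ρ hρ
end

section
/- Let J, λ, ω̄, η ∈ ℝ with J ≥ 0, λ ≥ 0, ω̄ ≥ 0, η ≥ 0, let ω ∈ ℝ, let I, Ī ∈ ℂ, and let ξ, ξ̄ ∈ ℂ with |ξ| = 1 and |ξ̄| = 1. Set p := Re(conj(ξ)·(i·ξ̄)) and T := J·(ω − ω̄)·ω·ω̄·p + λ·ω̄·Re(conj(I)·ξ)·p − λ·ω·Re(conj(Ī)·ξ̄)·p. Then T ≤ −(η − J·ω̄² + λ·Re(conj(Ī)·ξ̄))·(ω − ω̄)·p + η·|ω − ω̄|·|ξ − ξ̄| + J·ω̄·(ω − ω̄)² + λ·ω̄·|I − Ī|·|ξ − ξ̄| + λ·ω̄·|Ī|·|ξ − ξ̄|². -/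
/-! With `d = ‖ξ - ξb‖`, the quantity `p` is small in two ways: `|p| ≤ 1` because `ξ, ξb` are unit
vectors, and `|p| ≤ d` because `Re(conj ξ · i ξ) = 0`. Subtracting the first term of the right-hand
side from `T` leaves `J ωb (ω - ωb)² p + λ ωb (Re(conj I ξ) - Re(conj Ib ξb)) p + η (ω - ωb) p`;
splitting `Re(conj I ξ) - Re(conj Ib ξb) = Re(conj (I - Ib) ξ) + Re(conj Ib (ξ - ξb))`, each
product is bounded by Cauchy–Schwarz together with one of the two bounds on `p`. -/

open ComplexConjugate

namespace Complex

theorem abs_re_conj_mul_le (z w : ℂ) : |(conj z * w).re| ≤ ‖z‖ * ‖w‖ := by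
  simpa only [norm_mul, norm_conj] using abs_re_le_norm (conj z * w)

theorem re_conj_mul_I_mul_self (z : ℂ) : (conj z * (I * z)).re = 0 := by
  simp only [mul_re, mul_im, conj_re, conj_im, I_re, I_im]
  ring

theorem abs_re_conj_mul_I_mul_le (z w : ℂ) : |(conj z * (I * w)).re| ≤ ‖z‖ * ‖z - w‖ := by
  have hsplit : (conj z * (I * w)).re = (conj z * (I * (w - z))).re := by
    rw [mul_sub, mul_sub, sub_re, re_conj_mul_I_mul_self, sub_zero]
  calc |(conj z * (I * w)).re| = |(conj z * (I * (w - z))).re| := by rw [hsplit]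
    _ ≤ ‖z‖ * ‖I * (w - z)‖ := abs_re_conj_mul_le _ _
    _ = ‖z‖ * ‖z - w‖ := by rw [norm_mul, norm_I, one_mul, norm_sub_rev]

theorem re_conj_mul_sub_re_conj_mul (a b z w : ℂ) :
    (conj a * z).re - (conj b * w).re = (conj (a - b) * z).re + (conj b * (z - w)).re := by
  rw [← sub_re, ← add_re, map_sub]
  ring_nf

end Complex

theorem mul_le_mul_of_abs_le {a b c d : ℝ} (hab : |a| ≤ b) (hcd : |c| ≤ d) : a * c ≤ b * d :=
  calc a * c ≤ |a| * |c| := by rw [← abs_mul]; exact le_abs_self _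
    _ ≤ b * d := mul_le_mul hab hcd (abs_nonneg _) ((abs_nonneg _).trans hab)

/-- Bound on the residual coupling term `T` in the shifted energy
balance. -/
theorem coupling_term_bound (J lam ωb η : ℝ)
    (hJ : 0 ≤ J) (hlam : 0 ≤ lam) (hωb : 0 ≤ ωb) (hη : 0 ≤ η)
    (ω : ℝ) (I Ib ξ ξb : ℂ)
    (hξ : ‖ξ‖ = 1) (hξb : ‖ξb‖ = 1)
    (p T : ℝ)
    (hp : p = ((starRingEnd ℂ ξ) * (Complex.I * ξb)).re)
    (hT : T = J * (ω - ωb) * ω * ωb * p +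
      lam * ωb * ((starRingEnd ℂ I) * ξ).re * p -
      lam * ω * ((starRingEnd ℂ Ib) * ξb).re * p) :
    T ≤ -(η - J * ωb ^ 2 + lam * ((starRingEnd ℂ Ib) * ξb).re) * (ω - ωb) * p +
      η * |ω - ωb| * ‖ξ - ξb‖ +
      J * ωb * (ω - ωb) ^ 2 +
      lam * ωb * ‖I - Ib‖ * ‖ξ - ξb‖ +
      lam * ωb * ‖Ib‖ * ‖ξ - ξb‖ ^ 2 := by
  set a := (conj (I - Ib) * ξ).re
  set b := (conj Ib * (ξ - ξb)).re
  have hp_one : |p| ≤ 1 := by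
    simpa [hp, hξ, hξb] using Complex.abs_re_conj_mul_le ξ (Complex.I * ξb)
  have hp_dist : |p| ≤ ‖ξ - ξb‖ := by
    simpa [hp, hξ] using Complex.abs_re_conj_mul_I_mul_le ξ ξb
  have hT_sub : T = -(η - J * ωb ^ 2 + lam * (conj Ib * ξb).re) * (ω - ωb) * p +
      J * ωb * ((ω - ωb) ^ 2 * p) + lam * ωb * (a * p) + lam * ωb * (b * p) +
      η * ((ω - ωb) * p) := by
    rw [hT]
    linear_combination (lam * ωb * p) * Complex.re_conj_mul_sub_re_conj_mul I Ib ξ ξb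
  have hsq : (ω - ωb) ^ 2 * p ≤ (ω - ωb) ^ 2 * 1 :=
    mul_le_mul_of_abs_le (abs_of_nonneg (sq_nonneg _)).le hp_one
  have hω : (ω - ωb) * p ≤ |ω - ωb| * ‖ξ - ξb‖ := mul_le_mul_of_abs_le le_rfl hp_dist
  have ha : a * p ≤ ‖I - Ib‖ * ‖ξ - ξb‖ :=
    mul_le_mul_of_abs_le ((Complex.abs_re_conj_mul_le _ _).trans_eq (by rw [hξ, mul_one])) hp_dist
  have hb : b * p ≤ ‖Ib‖ * ‖ξ - ξb‖ * ‖ξ - ξb‖ :=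
    mul_le_mul_of_abs_le (Complex.abs_re_conj_mul_le _ _) hp_dist
  have hJωb := mul_nonneg hJ hωb
  have hlamωb := mul_nonneg hlam hωb
  rw [hT_sub]
  linarith [mul_le_mul_of_nonneg_left hsq hJωb, mul_le_mul_of_nonneg_left hω hη,
    mul_le_mul_of_nonneg_left ha hlamωb, mul_le_mul_of_nonneg_left hb hlamωb]
end

section
/- Let J, L, λ, η, ω̄ ∈ ℝ, let ξ̄, Ī ∈ ℂ with |ξ̄| = 1, and let δω, φ ∈ ℝ and z ∈ ℂ. Set ξ := exp(i·φ)·ξ̄, ω := ω̄ + δω, I := Ī + z, and r := η + λ·Re(conj(Ī)·ξ̄). Then (1/2)·J·|i·ω·ξ − i·ω̄·ξ̄|² + (1/2)·L·|I − Ī|² + (1/2)·(η − J·ω̄² + λ·Re(conj(Ī)·ξ̄))·|ξ − ξ̄|² = (1/2)·J·δω² + (J·ω̄·δω + r)·(1 − cos φ) + (1/2)·L·|z|². -/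
/-! Since `|i| = |ξ̄| = 1`, both angular terms are instances of the law of cosines
`|a e^{iφ} - b|² = (a - b)² + 2ab(1 - cos φ)` for real `a, b`; the term `-J ω̄²` in the
coefficient of `|ξ - ξ̄|²` then cancels the `ω̄²` part of the kinetic term. -/

open Complex in
theorem sq_norm_ofReal_mul_exp_sub_ofReal (a b φ : ℝ) :
    ‖(a : ℂ) * exp (I * φ) - b‖ ^ 2 = (a - b) ^ 2 + 2 * a * b * (1 - Real.cos φ) := by
  rw [mul_comm I, Complex.sq_norm, normSq_apply]
  simp only [sub_re, sub_im, re_ofReal_mul, im_ofReal_mul, exp_ofReal_mul_I_re,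
    exp_ofReal_mul_I_im, ofReal_re, ofReal_im]
  linear_combination a ^ 2 * Real.sin_sq_add_cos_sq φ

/-- The storage function in local coordinates
`(δω, φ, z)` on the manifold equals the quadratic-plus-angular expression. -/
theorem storage_local_coordinates (J L lam η ωb : ℝ) (ξb Ib : ℂ)
    (hξb : ‖ξb‖ = 1)
    (δω φ : ℝ) (z : ℂ)
    (ξ I : ℂ) (ω r : ℝ)
    (hξ : ξ = Complex.exp (Complex.I * φ) * ξb)
    (hω : ω = ωb + δω)
    (hI : I = Ib + z)
    (hr : r = η + lam * ((starRingEnd ℂ Ib) * ξb).re) :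
    (1 / 2) * J * ‖Complex.I * ω * ξ - Complex.I * ωb * ξb‖ ^ 2 +
      (1 / 2) * L * ‖I - Ib‖ ^ 2 +
      (1 / 2) * (η - J * ωb ^ 2 + lam * ((starRingEnd ℂ Ib) * ξb).re) *
        ‖ξ - ξb‖ ^ 2 =
    (1 / 2) * J * δω ^ 2 + (J * ωb * δω + r) * (1 - Real.cos φ) +
      (1 / 2) * L * ‖z‖ ^ 2 := by
  have hrot : ‖Complex.I * ω * ξ - Complex.I * ωb * ξb‖ ^ 2
      = δω ^ 2 + 2 * ω * ωb * (1 - Real.cos φ) := by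
    rw [hξ, show Complex.I * ω * (Complex.exp (Complex.I * φ) * ξb) - Complex.I * ωb * ξb
        = Complex.I * ((ω : ℂ) * Complex.exp (Complex.I * φ) - ωb) * ξb by ring,
      norm_mul, norm_mul, Complex.norm_I, hξb, one_mul, mul_one,
      sq_norm_ofReal_mul_exp_sub_ofReal, hω, add_sub_cancel_left]
  have hphase : ‖ξ - ξb‖ ^ 2 = 2 * (1 - Real.cos φ) := by
    simpa [hξ, ← sub_one_mul, hξb] using sq_norm_ofReal_mul_exp_sub_ofReal 1 1 φ
  rw [hrot, hphase, hI, add_sub_cancel_left, hr, hω]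
  ring
end
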